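/- Fix a 2-colouring of the complete symmetric digraph on ℕ⁺ with no red directed path of length r, and in which every blue directed path has upper density at most 1/r. Then there exists a finite set of vertices U such that, on ℕ⁺ \ U, the induced colouring has the following structure: the vertices partition into r sets A₀,...,A_{r-1} (where v ∈ A_i iff the longest red directed path from v has i edges) such that for all i < j every edge from A_i to A_j is blue and every edge from A_j to A_i is red, and all edges inside each A_i are blue. -/

import Mathlib

open Filter

open scoped Classical in
/-- Upper density of a set of naturals: `limsup |A ∩ {1,...,n}| / n`. -/
noncomputable def upDens (A : Set ℕ) : ℝ :=
  limsup (fun n : ℕ => (((Finset.Icc 1 n).filter (fun m => m ∈ A)).card : ℝ) / n) atTop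

def red : Bool := true
def blue : Bool := false

/-- A finite directed path (list of distinct positive integers) all of whose
consecutive edges have colour `col` under the edge-colouring `c`. -/
def FinPath (c : ℕ → ℕ → Bool) (col : Bool) (l : List ℕ) : Prop :=
  l.Nodup ∧ (∀ v ∈ l, 0 < v) ∧ l.Chain' (fun a b => c a b = col)

/-- An infinite directed path of colour `col` under the edge-colouring `c`. -/
def InfPath (c : ℕ → ℕ → Bool) (col : Bool) (f : ℕ → ℕ) : Prop :=
  Function.Injective f ∧ (∀ j, 0 < f j) ∧ ∀ j, c (f j) (f (j + 1)) = col

/-- There is no directed path of colour `col` with `r` edges (i.e. `r+1` vertices). -/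
def NoPathOfLength (c : ℕ → ℕ → Bool) (col : Bool) (r : ℕ) : Prop :=
  ¬ ∃ l : List ℕ, FinPath c col l ∧ l.length = r + 1

/-- There is a directed path of colour `col` with `k` edges starting at `v`. -/
def PathFrom (c : ℕ → ℕ → Bool) (col : Bool) (v k : ℕ) : Prop :=
  ∃ l : List ℕ, FinPath c col l ∧ l.head? = some v ∧ l.length = k + 1

/-- `v ∈ A_i`: the longest red directed path starting at `v` has exactly `i` edges. -/
def Level (c : ℕ → ℕ → Bool) (v i : ℕ) : Prop :=
  PathFrom c red v i ∧ ¬ PathFrom c red v (i + 1)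

/-- A red path from `v` with `k` edges avoiding the finite set `U`. -/
def PathFromAvoid (c : ℕ → ℕ → Bool) (U : Finset ℕ) (v k : ℕ) : Prop :=
  ∃ l : List ℕ, FinPath c red l ∧ (∀ x ∈ l, x ∉ U) ∧ l.head? = some v ∧ l.length = k + 1

/-- Level of `v` in the colouring induced on `ℕ⁺ \ U`. -/
def LevelAvoid (c : ℕ → ℕ → Bool) (U : Finset ℕ) (v i : ℕ) : Prop :=
  PathFromAvoid c U v i ∧ ¬ PathFromAvoid c U v (i + 1)

----------------------------------------------------------------
-- Chunk 1 : basic lemmas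
----------------------------------------------------------------

lemma not_red_eq_blue {b : Bool} (hb : b ≠ red) : b = blue := by
  cases b <;> simp_all [red, blue]

lemma finPath_prefix {c col} {l l' : List ℕ} (h : FinPath c col l) (hp : l' <+: l) :
    FinPath c col l' := by
  obtain ⟨hn, hpos, hch⟩ := h
  exact ⟨hn.sublist hp.sublist, fun v hv => hpos v (hp.sublist.subset hv), hch.prefix hp⟩

lemma pathFrom_mono {c col v k m} (h : PathFrom c col v k) (hm : m ≤ k) :
    PathFrom c col v m := by
  obtain ⟨l, hl, hh, hlen⟩ := h
  obtain ⟨t, rfl⟩ : ∃ t, l = v :: t := by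
    cases l with
    | nil => simp at hh
    | cons a t =>
      simp only [List.head?_cons, Option.some.injEq] at hh
      exact ⟨t, by rw [hh]⟩
  refine ⟨(v :: t).take (m+1), finPath_prefix hl (List.take_prefix _ _), by simp, ?_⟩
  rw [List.length_take]
  simp only [List.length_cons] at hlen
  rw [Nat.min_eq_left (by simp only [List.length_cons]; omega)]

lemma pathFrom_self {c col v} (hv : 0 < v) : PathFrom c col v 0 :=
  ⟨[v], ⟨by simp, by simpa using hv, List.isChain_singleton _⟩, by simp, by simp⟩

section
variable {c : ℕ → ℕ → Bool} {r : ℕ}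

lemma finPath_length_le (hr : 1 ≤ r) (h : NoPathOfLength c red r) {l : List ℕ}
    (hl : FinPath c red l) : l.length ≤ r := by
  by_contra hlen
  exact h ⟨l.take (r+1), finPath_prefix hl (List.take_prefix _ _), by
    simp [List.length_take]; omega⟩

lemma pathFrom_le (hr : 1 ≤ r) (h : NoPathOfLength c red r) {v k : ℕ}
    (hp : PathFrom c red v k) : k ≤ r - 1 := by
  obtain ⟨l, hl, -, hlen⟩ := hp
  have := finPath_length_le hr h hl
  omega

end

open scoped Classical in
/-- the level of a vertex : length of longest red path from it -/
noncomputable def lev (c : ℕ → ℕ → Bool) (r : ℕ) (v : ℕ) : ℕ :=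
  Nat.findGreatest (fun k => PathFrom c red v k) (r - 1)

section
variable {c : ℕ → ℕ → Bool} {r : ℕ}

lemma lev_le {v : ℕ} : lev c r v ≤ r - 1 := by
  classical
  exact Nat.findGreatest_le _

lemma lev_lt (hr : 1 ≤ r) {v : ℕ} : lev c r v < r := lt_of_le_of_lt lev_le (by omega)

lemma pathFrom_lev {v : ℕ} (hv : 0 < v) : PathFrom c red v (lev c r v) := by
  classical
  have h0 : PathFrom c red v 0 := pathFrom_self hv
  unfold lev
  exact Nat.findGreatest_spec (Nat.zero_le _) h0

lemma le_lev (hr : 1 ≤ r) (h : NoPathOfLength c red r) {v k : ℕ}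
    (hp : PathFrom c red v k) : k ≤ lev c r v := by
  classical
  unfold lev
  exact Nat.le_findGreatest (pathFrom_le hr h hp) hp

lemma not_pathFrom_succ (hr : 1 ≤ r) (h : NoPathOfLength c red r) (v : ℕ) :
    ¬ PathFrom c red v (lev c r v + 1) := fun hp => by
  have := le_lev hr h hp; omega

end

/-- level sets -/
def LSet (c : ℕ → ℕ → Bool) (r i : ℕ) : Set ℕ := {v | 0 < v ∧ lev c r v = i}

lemma LSet_pos {c r i v} (hv : v ∈ LSet c r i) : 0 < v := hv.1

----------------------------------------------------------------
-- Chunk 2 : counting and density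
----------------------------------------------------------------

open scoped Classical in
noncomputable def dcnt (A : Set ℕ) (n : ℕ) : ℕ :=
  ((Finset.Icc 1 n).filter (fun m => m ∈ A)).card

open scoped Classical in
lemma upDens_eq (A : Set ℕ) :
    upDens A = limsup (fun n : ℕ => (dcnt A n : ℝ) / n) atTop := rfl

lemma dcnt_le (A : Set ℕ) (n : ℕ) : dcnt A n ≤ n := by
  classical
  calc dcnt A n ≤ (Finset.Icc 1 n).card := Finset.card_le_card (Finset.filter_subset _ _)
  _ = n := by rw [Nat.card_Icc]; omega

lemma dcnt_mono {A B : Set ℕ} (hAB : A ⊆ B) (n : ℕ) : dcnt A n ≤ dcnt B n := by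
  classical
  apply Finset.card_le_card
  intro x hx
  simp only [dcnt, Finset.mem_filter] at *
  exact ⟨hx.1, hAB hx.2⟩

lemma dcnt_le_of_subset_finset {A : Set ℕ} {F : Finset ℕ} (hA : A ⊆ ↑F) (n : ℕ) :
    dcnt A n ≤ F.card := by
  classical
  apply Finset.card_le_card
  intro x hx
  simp only [dcnt, Finset.mem_filter] at hx
  exact_mod_cast hA hx.2

lemma dcnt_union_le (A B : Set ℕ) (n : ℕ) : dcnt (A ∪ B) n ≤ dcnt A n + dcnt B n := by
  classical
  simp only [dcnt]
  calc _ ≤ ((Finset.Icc 1 n).filter (fun m => m ∈ A) ∪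
        (Finset.Icc 1 n).filter (fun m => m ∈ B)).card := by
        apply Finset.card_le_card
        intro x hx
        simp only [Finset.mem_filter, Finset.mem_union, Set.mem_union] at *
        tauto
  _ ≤ _ := Finset.card_union_le _ _

lemma dcnt_add_le_of_disjoint {A B C : Set ℕ} (hd : Disjoint A B) (hA : A ⊆ C) (hB : B ⊆ C)
    (n : ℕ) : dcnt A n + dcnt B n ≤ dcnt C n := by
  classical
  simp only [dcnt]
  rw [← Finset.card_union_of_disjoint]
  · apply Finset.card_le_card
    intro x hx
    simp only [Finset.mem_union, Finset.mem_filter] at *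
    rcases hx with hx | hx
    exacts [⟨hx.1, hA hx.2⟩, ⟨hx.1, hB hx.2⟩]
  · rw [Finset.disjoint_filter]
    intro x _ hxA hxB
    exact Set.disjoint_left.1 hd hxA hxB

lemma upDens_empty_le {x : ℝ} (hx : 0 ≤ x) : upDens (∅ : Set ℕ) ≤ x := by
  classical
  rw [upDens_eq]
  have : (fun n : ℕ => (dcnt (∅ : Set ℕ) n : ℝ) / n) = fun _ => (0:ℝ) := by
    funext n
    simp [dcnt]
  rw [this, limsup_const]
  exact hx

lemma dseq_bdd (A : Set ℕ) :
    IsBoundedUnder (· ≤ ·) atTop (fun n : ℕ => (dcnt A n : ℝ) / n) := by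
  apply isBoundedUnder_of
  refine ⟨1, fun n => ?_⟩
  rcases Nat.eq_zero_or_pos n with rfl | hn
  · simp
  · rw [div_le_one (by exact_mod_cast hn)]
    exact_mod_cast dcnt_le A n

/-- The master density contradiction lemma. -/
lemma dens_contra {r : ℕ} (hr : 1 ≤ r) (I : Finset ℕ) (hI : I.card < r)
    (A : ℕ → Set ℕ) (hA : ∀ k ∈ I, upDens (A k) ≤ 1 / (r : ℝ)) (K : ℕ)
    (hpt : ∀ n : ℕ, 1 ≤ n → (n : ℝ) ≤ (∑ k ∈ I, (dcnt (A k) n : ℝ)) + K) : False := by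
  classical
  set m := I.card with hm
  have hr0 : (0:ℝ) < r := by exact_mod_cast hr
  set ε : ℝ := 1 / (2 * r * (m + 1)) with hε
  have hε0 : 0 < ε := by positivity
  -- eventually each density is < 1/r + ε
  have hev : ∀ k ∈ I, ∀ᶠ n : ℕ in atTop, (dcnt (A k) n : ℝ) / n < 1 / r + ε := by
    intro k hk
    apply eventually_lt_of_limsup_lt _ (dseq_bdd (A k))
    rw [← upDens_eq]
    exact lt_of_le_of_lt (hA k hk) (by linarith)
  have hev2 : ∀ᶠ n : ℕ in atTop, ∀ k ∈ I, (dcnt (A k) n : ℝ) / n < 1 / r + ε :=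
    (Filter.eventually_all_finset I).2 hev
  have hevK : ∀ᶠ n : ℕ in atTop, (K : ℝ) / n < ε :=
    (tendsto_const_div_atTop_nhds_zero_nat (K:ℝ)).eventually (gt_mem_nhds hε0)
  have hev1 : ∀ᶠ n : ℕ in atTop, 1 ≤ n := Filter.eventually_ge_atTop 1
  obtain ⟨n, h2, hK, h1⟩ := (hev2.and (hevK.and hev1)).exists
  have hn0 : (0:ℝ) < n := by exact_mod_cast h1
  have key : (1:ℝ) ≤ (∑ k ∈ I, (dcnt (A k) n : ℝ) / n) + (K:ℝ)/n := by
    have h0 := hpt n h1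
    calc (1:ℝ) = (n:ℝ)/n := by rw [div_self (ne_of_gt hn0)]
    _ ≤ ((∑ k ∈ I, (dcnt (A k) n : ℝ)) + K)/n := by
        exact (div_le_div_iff_of_pos_right hn0).2 h0
    _ = _ := by rw [add_div, Finset.sum_div]
  have e1 : (∑ k ∈ I, (dcnt (A k) n : ℝ)/n) ≤ (m:ℝ) * (1/r + ε) := by
    have h3 := Finset.sum_le_sum (fun k hk => le_of_lt (h2 k hk))
    calc (∑ k ∈ I, (dcnt (A k) n : ℝ)/n) ≤ ∑ _k ∈ I, (1/(r:ℝ) + ε) := h3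
    _ = (m:ℝ) * (1/r + ε) := by rw [Finset.sum_const, hm, nsmul_eq_mul]
  have hmul : ((m:ℝ)+1) * ε = 1/(2*r) := by
    rw [hε]
    field_simp
  have hm' : (m:ℝ) ≤ (r:ℝ) - 1 := by
    have : m + 1 ≤ r := hI
    have := (Nat.cast_le (α := ℝ)).2 this
    push_cast at this
    linarith
  have expand : (m:ℝ) * (1/r + ε) + ε = (m:ℝ)/r + ((m:ℝ)+1)*ε := by ring
  have final : (1:ℝ) ≤ (m:ℝ)/r + 1/(2*r) := by
    rw [← hmul, ← expand]
    linarith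
  have hd : (m:ℝ)/r ≤ ((r:ℝ)-1)/r := (div_le_div_iff_of_pos_right hr0).2 hm'
  have hx : ((r:ℝ)-1)/r = 1 - 1/r := by field_simp
  have hy : (0:ℝ) < 1/(2*(r:ℝ)) := by positivity
  have hz : 1/(2*(r:ℝ)) = (1/(r:ℝ))/2 := by ring
  have hy' : (0:ℝ) < 1/(r:ℝ) := by positivity
  linarith

----------------------------------------------------------------
-- Chunk 3 : structural lemmas
----------------------------------------------------------------

section Struct
variable {c : ℕ → ℕ → Bool} {r : ℕ}

/-- Fact 5: vertices of level ≤ lev y with a red edge into y all lie on one max path. -/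
lemma redin_card (hr : 1 ≤ r) (h : NoPathOfLength c red r) (y : ℕ) (hy : 0 < y) :
    ∃ F : Finset ℕ, F.card ≤ lev c r y ∧
      ∀ x, 0 < x → lev c r x ≤ lev c r y → x ≠ y → c x y = red → x ∈ F := by
  obtain ⟨l, hl, hhead, hlen⟩ := pathFrom_lev (c := c) (r := r) hy
  have hyl : y ∈ l := List.mem_of_mem_head? (by rw [hhead]; rfl)
  refine ⟨l.toFinset.erase y, ?_, ?_⟩
  · rw [Finset.card_erase_of_mem (by simpa using hyl),
      List.toFinset_card_of_nodup hl.1, hlen]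
    omega
  · intro x hx hlev hxy hred
    by_contra hxF
    have hxl : x ∉ l := by
      intro hmem
      exact hxF (Finset.mem_erase.2 ⟨hxy, by simpa using hmem⟩)
    have hpath : PathFrom c red x (lev c r y + 1) := by
      refine ⟨x :: l, ⟨?_, ?_, ?_⟩, by simp, by simp [hlen]⟩
      · exact List.nodup_cons.2 ⟨hxl, hl.1⟩
      · intro v hv
        rcases List.mem_cons.1 hv with rfl | hv
        · exact hx
        · exact hl.2.1 v hv
      · rw [List.Chain', List.isChain_cons]
        refine ⟨?_, hl.2.2⟩
        intro z hz
        rw [hhead] at hz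
        simp at hz
        rw [← hz]
        exact hred
    have := le_lev hr h hpath
    omega

lemma redin_finite (hr : 1 ≤ r) (h : NoPathOfLength c red r) (y : ℕ) (hy : 0 < y) :
    {x | 0 < x ∧ lev c r x ≤ lev c r y ∧ x ≠ y ∧ c x y = red}.Finite := by
  obtain ⟨F, -, hF⟩ := redin_card hr h y hy
  exact Set.Finite.subset F.finite_toSet
    (fun x hx => hF x hx.1 hx.2.1 hx.2.2.1 hx.2.2.2)

/-- an infinite set where everybody is red to cofinitely many others gives a long red path -/
lemma no_red_cofinite_clique (hr : 1 ≤ r) (h : NoPathOfLength c red r)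
    (S : Set ℕ) (hS : S.Infinite) (hpos : ∀ v ∈ S, 0 < v)
    (hstep : ∀ v ∈ S, {u | u ∈ S ∧ c v u ≠ red}.Finite) : False := by
  classical
  have key : ∀ n : ℕ, ∃ l : List ℕ, l.Nodup ∧ (∀ x ∈ l, x ∈ S) ∧
      l.Chain' (fun a b => c a b = red) ∧ l.length = n := by
    intro n
    induction n with
    | zero => exact ⟨[], by simp, by simp, List.isChain_nil, rfl⟩
    | succ n ih =>
      obtain ⟨l, hnd, hmem, hch, hlen⟩ := ih
      rcases eq_or_ne l [] with rfl | hne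
      · obtain ⟨v, hv⟩ := hS.nonempty
        exact ⟨[v], by simp, by simpa using hv, List.isChain_singleton _, by simp_all⟩
      · set z := l.getLast hne with hz
        have hzS : z ∈ S := hmem z (List.getLast_mem hne)
        obtain ⟨w, hw⟩ := (hS.diff ((hstep z hzS).union l.finite_toSet)).nonempty
        obtain ⟨hwS, hwbad⟩ := hw
        simp only [Set.mem_union, Set.mem_setOf_eq, not_or] at hwbad
        obtain ⟨hwbad1, hwl⟩ := hwbad
        have hred : c z w = red := by
          by_contra hc
          exact hwbad1 ⟨hwS, hc⟩
        have hwl' : w ∉ l := hwl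
        refine ⟨l ++ [w], ?_, ?_, ?_, by simp [hlen]⟩
        · refine List.Nodup.append hnd (by simp) ?_
          simpa [List.disjoint_singleton] using hwl' 
        · intro x hx
          rcases List.mem_append.1 hx with hx | hx
          · exact hmem x hx
          · simp at hx; rwa [hx]
        · rw [List.Chain', List.isChain_append]
          refine ⟨hch, by simp, ?_⟩
          intro x hx y hy
          rw [List.getLast?_eq_getLast (l := l) hne] at hx
          simp only [Option.mem_def, Option.some.injEq, List.head?_cons] at hx hy
          rw [← hx, ← hy, ← hz]
          exact hred
  obtain ⟨l, hnd, hmem, hch, hlen⟩ := key (r + 1)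
  exact h ⟨l, ⟨hnd, fun v hv => hpos v (hmem v hv), hch⟩, hlen⟩

/-- sinks within a level : finitely many blue out-neighbours in the level -/
def Sinks (c : ℕ → ℕ → Bool) (r i : ℕ) : Set ℕ :=
  {v | v ∈ LSet c r i ∧ {u | u ∈ LSet c r i ∧ c v u = blue}.Finite}

lemma sinks_finite (hr : 1 ≤ r) (h : NoPathOfLength c red r) (i : ℕ) :
    (Sinks c r i).Finite := by
  by_contra hinf
  refine no_red_cofinite_clique hr h (Sinks c r i) hinf
    (fun v hv => LSet_pos hv.1) ?_
  intro v hv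
  apply Set.Finite.subset hv.2
  intro u hu
  exact ⟨hu.1.1, not_red_eq_blue hu.2⟩

/-- counting partition over the levels -/
lemma count_partition (hr : 1 ≤ r) (n : ℕ) (hn : 1 ≤ n) :
    n = ∑ i ∈ Finset.range r, dcnt (LSet c r i) n := by
  classical
  have h1 : (Finset.Icc 1 n).card = n := by rw [Nat.card_Icc]; omega
  nth_rewrite 1 [← h1]
  rw [Finset.card_eq_sum_card_fiberwise
    (f := fun m => lev c r m) (t := Finset.range r)
    (fun x _ => Finset.mem_range.2 (lev_lt hr))]
  apply Finset.sum_congr rfl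
  intro i _
  simp only [dcnt]
  congr 1
  apply Finset.filter_congr
  intro x hx
  simp only [Finset.mem_Icc] at hx
  simp only [LSet, Set.mem_setOf_eq]
  constructor
  · intro hlev
    exact ⟨by omega, hlev⟩
  · exact fun hL => hL.2

end Struct

----------------------------------------------------------------
-- Chunk 4 : generic path builder
----------------------------------------------------------------

section Builder
variable {c : ℕ → ℕ → Bool}

private def BInv (c : ℕ → ℕ → Bool) (En : Set ℕ) (l : List ℕ) : Prop :=
  l ≠ [] ∧ l.Nodup ∧ (∀ x ∈ l, 0 < x) ∧ l.Chain' (fun a b => c a b = blue) ∧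
    ∃ e ∈ En, l.getLast? = some e

lemma build_infPath (En targets : Set ℕ) (hinf : targets.Infinite)
    (e0 : ℕ) (he0 : e0 ∈ En) (hpos0 : 0 < e0)
    (hstep : ∀ F : Finset ℕ, ∀ e ∈ En, ∀ t ∈ targets, t ∉ F →
      ∃ b : List ℕ, b ≠ [] ∧ b.Nodup ∧ (∀ x ∈ b, x ∉ F) ∧ (∀ x ∈ b, 0 < x) ∧ t ∈ b ∧
        (∃ e' ∈ En, b.getLast? = some e') ∧ (e :: b).Chain' (fun a b => c a b = blue)) :
    ∃ f : ℕ → ℕ, InfPath c blue f ∧ targets ⊆ Set.range f := by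
  classical
  -- uncovered targets always exist
  have exU : ∀ l : List ℕ, ∃ t, t ∈ targets ∧ t ∉ l := by
    intro l
    obtain ⟨t, ht, htl⟩ := (hinf.diff l.finite_toSet).nonempty
    exact ⟨t, ht, htl⟩
  -- one step of the construction
  have step : ∀ l : List ℕ, BInv c En l →
      ∃ l' : List ℕ, BInv c En l' ∧ l <+: l' ∧ l.length < l'.length ∧
        Nat.find (exU l) ∈ l' := by
    intro l hl
    obtain ⟨hne, hnd, hpos, hch, e, heEn, hlast⟩ := hl
    have hfind := Nat.find_spec (exU l)
    set t0 := Nat.find (exU l) with ht0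
    obtain ⟨b, hbne, hbnd, hbF, hbpos, htb, ⟨e', he'En, hblast⟩, hbch⟩ :=
      hstep l.toFinset e heEn t0 hfind.1 (by simpa using hfind.2)
    have hdisj : ∀ x ∈ b, x ∉ l := by
      intro x hx hxl
      exact hbF x hx (by simpa using hxl)
    refine ⟨l ++ b, ⟨by simp [hne], ?_, ?_, ?_, ?_⟩, List.prefix_append _ _, ?_, ?_⟩
    · refine hnd.append hbnd ?_
      rw [List.disjoint_left]
      intro a hal hab
      exact hdisj a hab hal
    · intro x hx
      rcases List.mem_append.1 hx with hx | hx
      exacts [hpos x hx, hbpos x hx]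
    · rw [List.Chain', List.isChain_append]
      refine ⟨hch, (List.isChain_cons.1 hbch).2, ?_⟩
      intro x hx y hy
      rw [hlast] at hx
      simp only [Option.mem_def, Option.some.injEq] at hx
      subst hx
      exact (List.isChain_cons.1 hbch).1 y hy
    · refine ⟨e', he'En, ?_⟩
      rw [List.getLast?_append, hblast]
      rfl
    · have : 0 < b.length := List.length_pos_iff.2 hbne
      simp only [List.length_append]
      omega
    · exact List.mem_append.2 (Or.inr htb)
  -- the recursive sequence of lists
  have inv0 : BInv c En [e0] := ⟨by simp, by simp, by simpa using hpos0, List.isChain_singleton _,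
    ⟨e0, he0, by simp⟩⟩
  let g : ℕ → {l : List ℕ // BInv c En l} := fun k =>
    Nat.rec ⟨[e0], inv0⟩ (fun _ p => ⟨(step p.1 p.2).choose,
      (step p.1 p.2).choose_spec.1⟩) k
  have hgsucc : ∀ k, (g (k+1)).1 = (step (g k).1 (g k).2).choose := fun k => rfl
  have hpre : ∀ k, (g k).1 <+: (g (k+1)).1 := by
    intro k
    rw [hgsucc k]
    exact (step (g k).1 (g k).2).choose_spec.2.1
  have hlt : ∀ k, (g k).1.length < (g (k+1)).1.length := by
    intro k
    rw [hgsucc k]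
    exact (step (g k).1 (g k).2).choose_spec.2.2.1
  have hcover : ∀ k, Nat.find (exU (g k).1) ∈ (g (k+1)).1 := by
    intro k
    rw [hgsucc k]
    exact (step (g k).1 (g k).2).choose_spec.2.2.2
  have hpre' : ∀ k k', k ≤ k' → (g k).1 <+: (g k').1 := by
    intro k k' hk
    induction k' with
    | zero => rw [Nat.le_zero.1 hk]
    | succ k' ih =>
      rcases Nat.lt_succ_iff_lt_or_eq.1 (Nat.lt_succ_of_le hk) with hlt' | rfl
      · exact (ih (by omega)).trans (hpre k')
      · exact List.prefix_refl _
  have hlen : ∀ k, k + 1 ≤ (g k).1.length := by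
    intro k
    induction k with
    | zero => simp [g]
    | succ k ih => have := hlt k; omega
  -- the path function
  set f : ℕ → ℕ := fun j => ((g (j+1)).1).getD j 0 with hf
  have hcoh : ∀ k j, (hj : j < (g k).1.length) → (g k).1.getD j 0 = f j := by
    intro k j hj
    have key : ∀ k k', k ≤ k' → ∀ (hj : j < (g k).1.length),
        (g k).1.getD j 0 = (g k').1.getD j 0 := by
      intro k k' hk hjk
      have hp := hpre' k k' hk
      have hjk' : j < (g k').1.length := lt_of_lt_of_le hjk hp.length_le
      rw [List.getD_eq_getElem _ _ hjk, List.getD_eq_getElem _ _ hjk']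
      exact hp.getElem hjk
    rcases le_total k (j+1) with hc | hc
    · exact key k (j+1) hc hj
    · exact (key (j+1) k hc (by have := hlen (j+1); omega)).symm
  have hmemf : ∀ j, f j ∈ (g (j+1)).1 := by
    intro j
    have hj : j < (g (j+1)).1.length := by have := hlen (j+1); omega
    rw [← hcoh (j+1) j hj, List.getD_eq_getElem _ _ hj]
    exact List.getElem_mem hj
  -- injectivity
  have hinj : Function.Injective f := by
    intro i j hij
    by_contra hne
    wlog hlt' : i < j generalizing i j
    · exact this hij.symm (Ne.symm hne) (by omega)
    have hi : i < (g (j+1)).1.length := by have := hlen (j+1); omega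
    have hj : j < (g (j+1)).1.length := by have := hlen (j+1); omega
    have e1 : (g (j+1)).1.getD i 0 = f i := hcoh (j+1) i hi
    have e2 : (g (j+1)).1.getD j 0 = f j := hcoh (j+1) j hj
    rw [List.getD_eq_getElem _ _ hi] at e1
    rw [List.getD_eq_getElem _ _ hj] at e2
    have : (g (j+1)).1[i] = (g (j+1)).1[j] := by rw [e1, e2, hij]
    exact hne (((g (j+1)).2.2.1).getElem_inj_iff.1 this)
  -- chain
  have hchain : ∀ j, c (f j) (f (j+1)) = blue := by
    intro j
    have h1 : j + 1 < (g (j+2)).1.length := by have := hlen (j+2); omega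
    have h0 : j < (g (j+2)).1.length := by omega
    have hch := (g (j+2)).2.2.2.2.1
    rw [List.Chain', List.isChain_iff_getElem] at hch
    have := hch j (by omega)
    rw [← hcoh (j+2) j h0, ← hcoh (j+2) (j+1) h1,
      List.getD_eq_getElem _ _ h0, List.getD_eq_getElem _ _ h1]
    exact this
  -- coverage
  have hmono : StrictMono (fun k => Nat.find (exU (g k).1)) := by
    apply strictMono_nat_of_lt_succ
    intro k
    have hm : Nat.find (exU (g k).1) ∈ (g (k+1)).1 := hcover k
    have hspec := Nat.find_spec (exU (g (k+1)).1)
    have hle : Nat.find (exU (g k).1) ≤ Nat.find (exU (g (k+1)).1) := by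
      apply Nat.find_min' (exU (g k).1)
      refine ⟨hspec.1, fun hc => hspec.2 ((hpre' k (k+1) (by omega)).subset hc)⟩
    rcases lt_or_eq_of_le hle with hlt' | heq
    · exact hlt'
    · exfalso
      exact hspec.2 (heq ▸ hm)
  have hcov : ∀ t ∈ targets, ∃ k, t ∈ (g k).1 := by
    intro t ht
    refine ⟨t+1, ?_⟩
    by_contra htg
    have : t < Nat.find (exU (g (t+1)).1) := by
      have h1 : t + 1 ≤ Nat.find (exU (g (t+1)).1) := by
        calc t + 1 ≤ (fun k => Nat.find (exU (g k).1)) (t+1) := hmono.le_apply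
        _ = _ := rfl
      omega
    exact (Nat.find_min (exU (g (t+1)).1) this) ⟨ht, htg⟩
  refine ⟨f, ⟨hinj, fun j => (g (j+1)).2.2.2.1 _ (hmemf j), hchain⟩, ?_⟩
  intro t ht
  obtain ⟨k, htk⟩ := hcov t ht
  obtain ⟨p, hp, hpt⟩ := List.mem_iff_getElem.1 htk
  refine ⟨p, ?_⟩
  rw [← hcoh k p hp, List.getD_eq_getElem _ _ hp]
  exact hpt

end Builder

----------------------------------------------------------------
-- Chunk 5 : per-level density bound ; levels are infinite
----------------------------------------------------------------

lemma not_blue_eq_red {b : Bool} (hb : b ≠ blue) : b = red := by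
  cases b <;> simp_all [red, blue]

section Levels
variable {c : ℕ → ℕ → Bool} {r : ℕ}

/-- the "good" part of a level -/
def GSet (c : ℕ → ℕ → Bool) (r i : ℕ) : Set ℕ := LSet c r i \ Sinks c r i

lemma GSet_blueout (hv : v ∈ GSet c r i) :
    {u | u ∈ LSet c r i ∧ c v u = blue}.Infinite := by
  intro hfin
  exact hv.2 ⟨hv.1, hfin⟩

lemma blue_into (hr : 1 ≤ r) (h : NoPathOfLength c red r) {t : ℕ} (ht : t ∈ LSet c r i) :
    {u | u ∈ LSet c r i ∧ u ≠ t ∧ c u t ≠ blue}.Finite := by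
  apply (redin_finite hr h t (LSet_pos ht)).subset
  rintro u ⟨hu, hut, hblue⟩
  exact ⟨LSet_pos hu, by rw [hu.2, ht.2], hut, not_blue_eq_red hblue⟩

lemma level_bound (hr : 1 ≤ r) (h : NoPathOfLength c red r)
    (hblue : ∀ f : ℕ → ℕ, InfPath c blue f → upDens (Set.range f) ≤ 1 / (r : ℝ))
    (i : ℕ) :
    ∃ (S : Set ℕ) (K : ℕ), upDens S ≤ 1 / (r:ℝ) ∧
      ∀ n, dcnt (LSet c r i) n ≤ dcnt S n + K := by
  classical
  rcases Set.finite_or_infinite (LSet c r i) with hfin | hinf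
  · refine ⟨∅, hfin.toFinset.card, upDens_empty_le (by positivity), fun n => ?_⟩
    have := dcnt_le_of_subset_finset (A := LSet c r i) (F := hfin.toFinset)
      (by rw [Set.Finite.coe_toFinset]) n
    omega
  · have hGinf : (GSet c r i).Infinite := hinf.diff (sinks_finite hr h i)
    obtain ⟨e0, he0⟩ := hGinf.nonempty
    have hstep : ∀ F : Finset ℕ, ∀ e ∈ GSet c r i, ∀ t ∈ GSet c r i, t ∉ F →
        ∃ b : List ℕ, b ≠ [] ∧ b.Nodup ∧ (∀ x ∈ b, x ∉ F) ∧ (∀ x ∈ b, 0 < x) ∧ t ∈ b ∧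
          (∃ e' ∈ GSet c r i, b.getLast? = some e') ∧
          (e :: b).Chain' (fun a b => c a b = blue) := by
      intro F e he t ht htF
      have hbo := GSet_blueout he
      obtain ⟨u, hu⟩ := (hbo.diff (((sinks_finite hr h i).union F.finite_toSet).union
        ((blue_into hr h ht.1).union (Set.finite_singleton t)))).nonempty
      obtain ⟨⟨huL, hueb⟩, hubad⟩ := hu
      simp only [Set.mem_union, Set.mem_setOf_eq, Set.mem_singleton_iff, not_or] at hubad
      obtain ⟨⟨husink, huF⟩, hubi, hunet⟩ := hubad
      have hut : c u t = blue := by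
        by_contra hc
        exact hubi ⟨huL, hunet, hc⟩
      refine ⟨[u, t], by simp, by simp [hunet], ?_, ?_, by simp, ⟨t, ht, by simp⟩, ?_⟩
      · intro x hx
        rcases List.mem_pair.1 hx with rfl | rfl
        · simpa using huF
        · exact htF
      · intro x hx
        rcases List.mem_pair.1 hx with rfl | rfl
        · exact LSet_pos huL
        · exact LSet_pos ht.1
      · rw [List.Chain', List.isChain_cons_cons, List.isChain_cons_cons]
        exact ⟨hueb, hut, List.isChain_singleton _⟩
    obtain ⟨f, hfpath, hfcov⟩ := build_infPath (GSet c r i) (GSet c r i) hGinf e0 he0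
      (LSet_pos he0.1) hstep
    refine ⟨Set.range f, (sinks_finite hr h i).toFinset.card, hblue f hfpath, fun n => ?_⟩
    have h1 : dcnt (LSet c r i) n ≤ dcnt (Set.range f ∪ Sinks c r i) n := by
      apply dcnt_mono
      intro x hx
      by_cases hs : x ∈ Sinks c r i
      · exact Or.inr hs
      · exact Or.inl (hfcov ⟨hx, hs⟩)
    have h2 := dcnt_union_le (Set.range f) (Sinks c r i) n
    have h3 := dcnt_le_of_subset_finset (A := Sinks c r i)
      (F := (sinks_finite hr h i).toFinset) (by rw [Set.Finite.coe_toFinset]) n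
    omega

lemma levels_infinite (hr : 1 ≤ r) (h : NoPathOfLength c red r)
    (hblue : ∀ f : ℕ → ℕ, InfPath c blue f → upDens (Set.range f) ≤ 1 / (r : ℝ))
    (j : ℕ) (hj : j < r) : (LSet c r j).Infinite := by
  classical
  by_contra hfin
  rw [Set.not_infinite] at hfin
  choose S K hS hK using level_bound hr h hblue (c := c) (r := r)
  have hjr : j ∈ Finset.range r := Finset.mem_range.2 hj
  have hcard : ((Finset.range r).erase j).card < r := by
    rw [Finset.card_erase_of_mem hjr, Finset.card_range]
    omega
  apply dens_contra hr ((Finset.range r).erase j) hcard S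
    (fun k _ => hS k)
    ((∑ i ∈ (Finset.range r).erase j, K i) + hfin.toFinset.card)
  intro n hn
  have hpart := count_partition (c := c) hr n hn
  have hsum : ∑ i ∈ (Finset.range r).erase j, dcnt (LSet c r i) n + dcnt (LSet c r j) n
      = ∑ i ∈ Finset.range r, dcnt (LSet c r i) n :=
    Finset.sum_erase_add _ _ hjr
  have hLj : dcnt (LSet c r j) n ≤ hfin.toFinset.card :=
    dcnt_le_of_subset_finset (by rw [Set.Finite.coe_toFinset]) n
  have hterm : ∀ i ∈ (Finset.range r).erase j,
      dcnt (LSet c r i) n ≤ dcnt (S i) n + K i := fun i _ => hK i n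
  have hsum2 : ∑ i ∈ (Finset.range r).erase j, dcnt (LSet c r i) n ≤
      ∑ i ∈ (Finset.range r).erase j, (dcnt (S i) n + K i) := Finset.sum_le_sum hterm
  rw [Finset.sum_add_distrib] at hsum2
  have : (n:ℕ) ≤ (∑ i ∈ (Finset.range r).erase j, dcnt (S i) n) +
      ((∑ i ∈ (Finset.range r).erase j, K i) + hfin.toFinset.card) := by omega
  exact_mod_cast by exact_mod_cast (by push_cast; exact_mod_cast this :
    (n:ℝ) ≤ (∑ k ∈ (Finset.range r).erase j, (dcnt (S k) n : ℝ)) +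
      ((∑ i ∈ (Finset.range r).erase j, K i : ℕ) + (hfin.toFinset.card : ℕ) : ℕ))

end Levels

----------------------------------------------------------------
-- Chunk 6 : covering the blue-descending anomalies
----------------------------------------------------------------

lemma exists_disjoint_family {P : ℕ → ℕ → Prop}
    (hnc : ∀ F : Finset ℕ, ∃ x y, x ∉ F ∧ y ∉ F ∧ P x y) :
    ∃ p : ℕ → ℕ × ℕ, (∀ n, P (p n).1 (p n).2) ∧
      (∀ m n, m < n → (p m).1 ≠ (p n).1 ∧ (p m).1 ≠ (p n).2 ∧
        (p m).2 ≠ (p n).1 ∧ (p m).2 ≠ (p n).2) := by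
  classical
  have step : ∀ F : Finset ℕ, ∃ xy : ℕ × ℕ, xy.1 ∉ F ∧ xy.2 ∉ F ∧ P xy.1 xy.2 := by
    intro F
    obtain ⟨x, y, h1, h2, h3⟩ := hnc F
    exact ⟨(x, y), h1, h2, h3⟩
  let q : ℕ → (ℕ × ℕ) × Finset ℕ := fun n => Nat.rec
    ((step ∅).choose, insert (step ∅).choose.1 (insert (step ∅).choose.2 (∅ : Finset ℕ)))
    (fun _ prev => ((step prev.2).choose,
      insert (step prev.2).choose.1 (insert (step prev.2).choose.2 prev.2))) n
  have hq0 : q 0 = ((step ∅).choose,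
      insert (step ∅).choose.1 (insert (step ∅).choose.2 (∅ : Finset ℕ))) := rfl
  have hqs : ∀ n, q (n+1) = ((step (q n).2).choose,
      insert (step (q n).2).choose.1 (insert (step (q n).2).choose.2 (q n).2)) :=
    fun n => rfl
  have hP : ∀ n, P (q n).1.1 (q n).1.2 := by
    intro n
    cases n with
    | zero => exact (step ∅).choose_spec.2.2
    | succ n => rw [hqs n]; exact (step (q n).2).choose_spec.2.2
  have hin : ∀ n, (q n).1.1 ∈ (q n).2 ∧ (q n).1.2 ∈ (q n).2 := by
    intro n
    cases n with
    | zero => rw [hq0]; simp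
    | succ n => rw [hqs n]; simp
  have hsub : ∀ n, (q n).2 ⊆ (q (n+1)).2 := by
    intro n
    rw [hqs n]
    intro z hz
    simp [hz]
  have hsub' : ∀ m n, m ≤ n → (q m).2 ⊆ (q n).2 := by
    intro m n hmn
    induction n with
    | zero => rw [Nat.le_zero.1 hmn]
    | succ n ih =>
      rcases Nat.lt_succ_iff_lt_or_eq.1 (Nat.lt_succ_of_le hmn) with hlt | rfl
      · exact (ih (by omega)).trans (hsub n)
      · exact subset_rfl
  have hnot : ∀ n, (q (n+1)).1.1 ∉ (q n).2 ∧ (q (n+1)).1.2 ∉ (q n).2 := by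
    intro n
    rw [hqs n]
    exact ⟨(step (q n).2).choose_spec.1, (step (q n).2).choose_spec.2.1⟩
  refine ⟨fun n => (q n).1, hP, ?_⟩
  intro m n hmn
  obtain ⟨k, rfl⟩ : ∃ k, n = k + 1 := ⟨n - 1, by omega⟩
  have h1 : (q m).1.1 ∈ (q k).2 := hsub' m k (by omega) (hin m).1
  have h2 : (q m).1.2 ∈ (q k).2 := hsub' m k (by omega) (hin m).2
  have h3 := hnot k
  constructor
  · intro he; rw [he] at h1; exact h3.1 h1
  constructor
  · intro he; rw [he] at h1; exact h3.2 h1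
  constructor
  · intro he; rw [he] at h2; exact h3.1 h2
  · intro he; rw [he] at h2; exact h3.2 h2

section BKill
variable {c : ℕ → ℕ → Bool} {r : ℕ}

/-- vertices of level b with only finitely many blue out-edges into level a -/
def USink (c : ℕ → ℕ → Bool) (r a b : ℕ) : Set ℕ :=
  {u | u ∈ LSet c r b ∧ {w | w ∈ LSet c r a ∧ c u w = blue}.Finite}

lemma usinks_finite (hr : 1 ≤ r) (h : NoPathOfLength c red r) {a b : ℕ} (hb : b < a)
    (ha : a < r) (hLa : (LSet c r a).Infinite) : (USink c r a b).Finite := by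
  classical
  by_contra hinf
  have hinf' : (USink c r a b).Infinite := hinf
  obtain ⟨T, hTsub, hTcard⟩ := hinf'.exists_subset_card_eq (a + 1)
  have hbad : (⋃ u ∈ T, {w | w ∈ LSet c r a ∧ c u w = blue}).Finite := by
    apply Set.Finite.biUnion T.finite_toSet
    intro u hu
    exact (hTsub hu).2
  obtain ⟨w, hw⟩ := (hLa.diff (hbad.union T.finite_toSet)).nonempty
  obtain ⟨hwL, hwbad⟩ := hw
  simp only [Set.mem_union, Set.mem_iUnion, Set.mem_setOf_eq, not_or, not_exists] at hwbad
  obtain ⟨hw1, hw2⟩ := hwbad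
  obtain ⟨F, hFcard, hF⟩ := redin_card hr h w (LSet_pos hwL)
  have hTF : T ⊆ F := by
    intro u hu
    have huU := hTsub hu
    have hured : c u w = red := by
      apply not_blue_eq_red
      intro hblue
      exact hw1 u hu ⟨hwL, hblue⟩
    refine hF u (LSet_pos huU.1) ?_ ?_ hured
    · rw [huU.1.2, hwL.2]; omega
    · intro he; rw [he] at hu; exact hw2 (by simpa using hu)
  have := Finset.card_le_card hTF
  rw [hTcard] at this
  rw [hwL.2] at hFcard
  omega

lemma bclass_cover (hr : 1 ≤ r) (h : NoPathOfLength c red r)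
    (hblue : ∀ f : ℕ → ℕ, InfPath c blue f → upDens (Set.range f) ≤ 1 / (r : ℝ))
    {a b : ℕ} (hb : b < a) (ha : a < r) :
    ∃ F : Finset ℕ, ∀ x y, x ∉ F → y ∉ F → 0 < x → 0 < y →
      lev c r x = a → lev c r y = b → c x y ≠ blue := by
  classical
  by_contra hnc
  push_neg at hnc
  have hnc' : ∀ F : Finset ℕ, ∃ x y, x ∉ F ∧ y ∉ F ∧
      (x ∈ LSet c r a ∧ y ∈ LSet c r b ∧ c x y = blue) := by
    intro F
    obtain ⟨x, y, h1, h2, h3, h4, h5, h6, h7⟩ := hnc F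
    exact ⟨x, y, h1, h2, ⟨h3, h5⟩, ⟨h4, h6⟩, h7⟩
  obtain ⟨p, hp, hpd⟩ := exists_disjoint_family hnc'
  -- distinctness of coordinates
  have hx_inj : ∀ m n, m ≠ n → (p m).1 ≠ (p n).1 := by
    intro m n hmn
    rcases Nat.lt_or_ge m n with hlt | hge
    · exact (hpd m n hlt).1
    · exact fun he => (hpd n m (by omega)).1 he.symm
  have hbadfin : ∀ B : Set ℕ, B.Finite → {n | (p n).1 ∈ B ∨ (p n).2 ∈ B}.Finite := by
    intro B hB
    apply Set.Finite.subset (Set.Finite.biUnion hB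
      (fun v _ => Set.Subsingleton.finite (s := {n | (p n).1 = v ∨ (p n).2 = v}) ?_))
    · intro n hn
      simp only [Set.mem_setOf_eq] at hn
      rcases hn with hn | hn
      · exact Set.mem_biUnion hn (by simp)
      · exact Set.mem_biUnion hn (by simp)
    · intro m hm n hn
      by_contra hmn
      wlog hlt : m < n generalizing m n
      · exact this hn hm (Ne.symm hmn) (by omega)
      obtain ⟨d1, d2, d3, d4⟩ := hpd m n hlt
      simp only [Set.mem_setOf_eq] at hm hn
      rcases hm with hm | hm <;> rcases hn with hn | hn
      · exact d1 (hm.trans hn.symm)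
      · exact d2 (hm.trans hn.symm)
      · exact d3 (hm.trans hn.symm)
      · exact d4 (hm.trans hn.symm)
  -- infinite levels and their good parts
  have hLa : (LSet c r a).Infinite := levels_infinite hr h hblue a ha
  have hLb : (LSet c r b).Infinite := levels_infinite hr h hblue b (by omega)
  have hGa : (GSet c r a).Infinite := hLa.diff (sinks_finite hr h a)
  have hGb : (GSet c r b).Infinite := hLb.diff (sinks_finite hr h b)
  have hUS : (USink c r a b).Finite := usinks_finite hr h hb ha hLa
  obtain ⟨e0, he0⟩ := hGb.nonempty
  have hGdisj : Disjoint (GSet c r a) (GSet c r b) := by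
    rw [Set.disjoint_left]
    intro v hva hvb
    have := hva.1.2
    have := hvb.1.2
    omega
  -- the step for the path builder
  have hstep : ∀ F : Finset ℕ, ∀ e ∈ GSet c r b, ∀ t ∈ GSet c r a ∪ GSet c r b, t ∉ F →
      ∃ bl : List ℕ, bl ≠ [] ∧ bl.Nodup ∧ (∀ x ∈ bl, x ∉ F) ∧ (∀ x ∈ bl, 0 < x) ∧
        t ∈ bl ∧ (∃ e' ∈ GSet c r b, bl.getLast? = some e') ∧
        (e :: bl).Chain' (fun a b => c a b = blue) := by
    intro F e he t ht htF
    rcases ht with ht | ht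
    · -- t in level a : use an anomalous pair to come back down
      -- choose a fresh anomalous pair
      have hBfin : ((↑F : Set ℕ) ∪ ({t} ∪ Sinks c r b)).Finite :=
        F.finite_toSet.union ((Set.finite_singleton t).union (sinks_finite hr h b))
      obtain ⟨n, hn⟩ := (hbadfin _ hBfin).infinite_compl.nonempty
      simp only [Set.mem_compl_iff, Set.mem_setOf_eq, not_or] at hn
      obtain ⟨hnx, hny⟩ := hn
      simp only [Set.mem_union, Set.mem_singleton_iff, Finset.coe_insert, not_or,
        Finset.mem_coe] at hnx hny
      set x := (p n).1 with hxdef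
      set y := (p n).2 with hydef
      obtain ⟨hxL, hyL, hxy⟩ := hp n
      obtain ⟨hxF, hxt, hxs⟩ := hnx
      obtain ⟨hyF, hyt, hys⟩ := hny
      have hyG : y ∈ GSet c r b := ⟨hyL, hys⟩
      -- choose u : fresh in G_b, not an upward sink, blue from e
      obtain ⟨u, hu⟩ := ((GSet_blueout he).diff ((((sinks_finite hr h b).union
        hUS).union F.finite_toSet).union (Set.finite_singleton t |>.union
        ((Set.finite_singleton x).union (Set.finite_singleton y))))).nonempty
      obtain ⟨⟨huL, hueb⟩, hubad⟩ := hu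
      simp only [Set.mem_union, Set.mem_singleton_iff, Finset.mem_coe, not_or] at hubad
      obtain ⟨⟨⟨husink, huUS⟩, huF⟩, hut, hux, huy⟩ := hubad
      have hublue : {w | w ∈ LSet c r a ∧ c u w = blue}.Infinite := by
        intro hfin
        exact huUS ⟨huL, hfin⟩
      -- choose w : fresh in G_a, blue from u
      obtain ⟨w, hw⟩ := (hublue.diff (((sinks_finite hr h a).union F.finite_toSet).union
        ((Set.finite_singleton t).union ((Set.finite_singleton x).union
        ((Set.finite_singleton y).union (Set.finite_singleton u)))))).nonempty
      obtain ⟨⟨hwL, hwub⟩, hwbad⟩ := hw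
      simp only [Set.mem_union, Set.mem_singleton_iff, Finset.mem_coe, not_or] at hwbad
      obtain ⟨⟨hwsink, hwF⟩, hwt, hwx, hwy, hwu⟩ := hwbad
      have hwG : w ∈ GSet c r a := ⟨hwL, hwsink⟩
      -- choose v1 : fresh in level a, blue from w, blue into t
      obtain ⟨v1, hv1⟩ := ((GSet_blueout hwG).diff ((((blue_into hr h ht.1).union
        F.finite_toSet)).union ((Set.finite_singleton t).union ((Set.finite_singleton x).union
        ((Set.finite_singleton y).union ((Set.finite_singleton u).union
        (Set.finite_singleton w))))))).nonempty
      obtain ⟨⟨hv1L, hv1wb⟩, hv1bad⟩ := hv1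
      simp only [Set.mem_union, Set.mem_singleton_iff, Set.mem_setOf_eq, Finset.mem_coe,
        not_or] at hv1bad
      obtain ⟨⟨hv1bi, hv1F⟩, hv1t, hv1x, hv1y, hv1u, hv1w⟩ := hv1bad
      have hv1tb : c v1 t = blue := by
        by_contra hcc
        exact hv1bi ⟨hv1L, hv1t, hcc⟩
      -- choose v2 : fresh in level a, blue from t, blue into x
      have hxLa : x ∈ LSet c r a := hxL
      obtain ⟨v2, hv2⟩ := ((GSet_blueout ht).diff ((((blue_into hr h hxLa).union
        F.finite_toSet)).union ((Set.finite_singleton t).union ((Set.finite_singleton x).union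
        ((Set.finite_singleton y).union ((Set.finite_singleton u).union
        ((Set.finite_singleton w).union (Set.finite_singleton v1)))))))).nonempty
      obtain ⟨⟨hv2L, hv2tb⟩, hv2bad⟩ := hv2
      simp only [Set.mem_union, Set.mem_singleton_iff, Set.mem_setOf_eq, Finset.mem_coe,
        not_or] at hv2bad
      obtain ⟨⟨hv2bi, hv2F⟩, hv2t, hv2x, hv2y, hv2u, hv2w, hv2v1⟩ := hv2bad
      have hv2xb : c v2 x = blue := by
        by_contra hcc
        exact hv2bi ⟨hv2L, hv2x, hcc⟩
      -- the block
      have hta : t ∈ LSet c r a := ht.1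
      have hxyne : x ≠ y := by
        intro he
        have h1 := hxL.2
        have h2 := hyL.2
        rw [hxdef, hydef] at he
        rw [he] at h1
        omega
      have htyne : t ≠ y := by
        intro he
        have h1 := hta.2
        have h2 := hyL.2
        rw [hydef] at he
        rw [he] at h1
        omega
      refine ⟨[u, w, v1, t, v2, x, y], by simp, ?_, ?_, ?_, by simp, ⟨y, hyG, by simp⟩, ?_⟩
      · have l1 : u ≠ w := Ne.symm hwu
        have l2 : u ≠ v1 := Ne.symm hv1u
        have l3 : u ≠ t := hut
        have l4 : u ≠ v2 := Ne.symm hv2u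
        have l5 : u ≠ x := hux
        have l6 : u ≠ y := huy
        have l7 : w ≠ v1 := Ne.symm hv1w
        have l8 : w ≠ t := hwt
        have l9 : w ≠ v2 := Ne.symm hv2w
        have l10 : w ≠ x := hwx
        have l11 : w ≠ y := hwy
        have l12 : v1 ≠ t := hv1t
        have l13 : v1 ≠ v2 := Ne.symm hv2v1
        have l14 : v1 ≠ x := hv1x
        have l15 : v1 ≠ y := hv1y
        have l16 : t ≠ v2 := Ne.symm hv2t
        have l17 : t ≠ x := Ne.symm hxt
        have l18 : t ≠ y := htyne
        have l19 : v2 ≠ x := hv2x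
        have l20 : v2 ≠ y := hv2y
        have l21 : x ≠ y := hxyne
        simp [List.nodup_cons, l1, l2, l3, l4, l5, l6, l7, l8, l9, l10, l11, l12, l13,
          l14, l15, l16, l17, l18, l19, l20, l21]
      · intro z hz
        simp only [List.mem_cons, List.mem_singleton, List.not_mem_nil, or_false] at hz
        rcases hz with rfl | rfl | rfl | rfl | rfl | rfl | rfl
        exacts [huF, hwF, hv1F, htF, hv2F, hxF, hyF]
      · intro z hz
        simp only [List.mem_cons, List.mem_singleton, List.not_mem_nil, or_false] at hz
        rcases hz with rfl | rfl | rfl | rfl | rfl | rfl | rfl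
        exacts [LSet_pos huL, LSet_pos hwL, LSet_pos hv1L, LSet_pos hta,
          LSet_pos hv2L, LSet_pos hxL, LSet_pos hyL]
      · simp only [List.Chain', List.isChain_cons_cons]
        exact ⟨hueb, hwub, hv1wb, hv1tb, hv2tb, hv2xb, hxy, List.isChain_singleton _⟩
    · -- t in level b : stay within the level
      obtain ⟨u, hu⟩ := ((GSet_blueout he).diff (((sinks_finite hr h b).union
        F.finite_toSet).union ((blue_into hr h ht.1).union
        (Set.finite_singleton t)))).nonempty
      obtain ⟨⟨huL, hueb⟩, hubad⟩ := hu
      simp only [Set.mem_union, Set.mem_singleton_iff, Set.mem_setOf_eq, Finset.mem_coe,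
        not_or] at hubad
      obtain ⟨⟨husink, huF⟩, hubi, hunet⟩ := hubad
      have hut : c u t = blue := by
        by_contra hc
        exact hubi ⟨huL, hunet, hc⟩
      refine ⟨[u, t], by simp, by simp [hunet], ?_, ?_, by simp, ⟨t, ht, by simp⟩, ?_⟩
      · intro z hz
        rcases List.mem_pair.1 hz with rfl | rfl
        exacts [huF, htF]
      · intro z hz
        rcases List.mem_pair.1 hz with rfl | rfl
        exacts [LSet_pos huL, LSet_pos ht.1]
      · rw [List.Chain', List.isChain_cons_cons, List.isChain_cons_cons]
        exact ⟨hueb, hut, List.isChain_singleton _⟩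
  -- build the path and derive the density contradiction
  obtain ⟨f, hfpath, hfcov⟩ := build_infPath (GSet c r b) (GSet c r a ∪ GSet c r b)
    (hGa.mono Set.subset_union_left) e0 he0 (LSet_pos he0.1) hstep
  have hdens := hblue f hfpath
  choose S K hS hK using level_bound hr h hblue (c := c) (r := r)
  have har : a ∈ Finset.range r := Finset.mem_range.2 ha
  have hbr : b ∈ (Finset.range r).erase a :=
    Finset.mem_erase.2 ⟨by omega, Finset.mem_range.2 (by omega)⟩
  set I0 : Finset ℕ := ((Finset.range r).erase a).erase b with hI0
  have hrI0 : r ∉ I0 := by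
    intro hrmem
    have := Finset.mem_range.1 (Finset.mem_of_mem_erase (Finset.mem_of_mem_erase hrmem))
    omega
  have hcard : (insert r I0).card < r := by
    rw [Finset.card_insert_of_notMem hrI0, hI0, Finset.card_erase_of_mem hbr,
      Finset.card_erase_of_mem har, Finset.card_range]
    omega
  refine dens_contra hr (insert r I0) hcard
    (fun k => if k = r then Set.range f else S k)
    (fun k hk => ?_) ((∑ i ∈ I0, K i) +
      ((sinks_finite hr h a).toFinset.card + (sinks_finite hr h b).toFinset.card))
    (fun n hn => ?_)
  · rcases Finset.mem_insert.1 hk with rfl | hk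
    · simpa using hdens
    · have hkr : k ≠ r := fun he => hrI0 (he ▸ hk)
      simpa [hkr] using hS k
  · have hpart := count_partition (c := c) hr n hn
    have hs1 : ∑ i ∈ (Finset.range r).erase a, dcnt (LSet c r i) n + dcnt (LSet c r a) n
        = ∑ i ∈ Finset.range r, dcnt (LSet c r i) n := Finset.sum_erase_add _ _ har
    have hs2 : ∑ i ∈ I0, dcnt (LSet c r i) n + dcnt (LSet c r b) n
        = ∑ i ∈ (Finset.range r).erase a, dcnt (LSet c r i) n := Finset.sum_erase_add _ _ hbr
    have hga : dcnt (LSet c r a) n ≤ dcnt (GSet c r a) n +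
        (sinks_finite hr h a).toFinset.card := by
      have h1 : dcnt (LSet c r a) n ≤ dcnt (GSet c r a ∪ Sinks c r a) n := by
        apply dcnt_mono
        intro v hv
        by_cases hs : v ∈ Sinks c r a
        · exact Or.inr hs
        · exact Or.inl ⟨hv, hs⟩
      have h2 := dcnt_union_le (GSet c r a) (Sinks c r a) n
      have h3 := dcnt_le_of_subset_finset (A := Sinks c r a)
        (F := (sinks_finite hr h a).toFinset) (by rw [Set.Finite.coe_toFinset]) n
      omega
    have hgb : dcnt (LSet c r b) n ≤ dcnt (GSet c r b) n +
        (sinks_finite hr h b).toFinset.card := by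
      have h1 : dcnt (LSet c r b) n ≤ dcnt (GSet c r b ∪ Sinks c r b) n := by
        apply dcnt_mono
        intro v hv
        by_cases hs : v ∈ Sinks c r b
        · exact Or.inr hs
        · exact Or.inl ⟨hv, hs⟩
      have h2 := dcnt_union_le (GSet c r b) (Sinks c r b) n
      have h3 := dcnt_le_of_subset_finset (A := Sinks c r b)
        (F := (sinks_finite hr h b).toFinset) (by rw [Set.Finite.coe_toFinset]) n
      omega
    have hcov2 : dcnt (GSet c r a) n + dcnt (GSet c r b) n ≤ dcnt (Set.range f) n :=
      dcnt_add_le_of_disjoint hGdisj (fun v hv => hfcov (Or.inl hv))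
        (fun v hv => hfcov (Or.inr hv)) n
    have hterm : ∑ i ∈ I0, dcnt (LSet c r i) n ≤
        ∑ i ∈ I0, dcnt (S i) n + ∑ i ∈ I0, K i := by
      rw [← Finset.sum_add_distrib]
      exact Finset.sum_le_sum (fun i _ => hK i n)
    have hNat : n ≤ dcnt (Set.range f) n + (∑ i ∈ I0, dcnt (S i) n) +
        ((∑ i ∈ I0, K i) +
          ((sinks_finite hr h a).toFinset.card + (sinks_finite hr h b).toFinset.card)) := by
      omega
    have hsum_if : ∑ k ∈ I0, (dcnt (if k = r then Set.range f else S k) n : ℝ)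
        = ∑ k ∈ I0, (dcnt (S k) n : ℝ) := by
      apply Finset.sum_congr rfl
      intro k hk
      have hkr : k ≠ r := fun he => hrI0 (he ▸ hk)
      rw [if_neg hkr]
    show (n:ℝ) ≤ (∑ k ∈ insert r I0, (dcnt (if k = r then Set.range f else S k) n : ℝ)) + _
    rw [Finset.sum_insert hrI0, if_pos rfl, hsum_if]
    push_cast
    exact_mod_cast (by exact_mod_cast hNat :
      (n:ℝ) ≤ (dcnt (Set.range f) n : ℝ) + (∑ k ∈ I0, (dcnt (S k) n : ℝ)) +
        (((∑ i ∈ I0, K i : ℕ) : ℝ) +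
          (((sinks_finite hr h a).toFinset.card : ℝ) +
            ((sinks_finite hr h b).toFinset.card : ℝ))))

end BKill

----------------------------------------------------------------
-- Chunk 7 : main structure lemma and the theorem
----------------------------------------------------------------

section Main
variable {c : ℕ → ℕ → Bool} {r : ℕ}

lemma exists_cover (hr : 1 ≤ r) (h : NoPathOfLength c red r)
    (hblue : ∀ f : ℕ → ℕ, InfPath c blue f → upDens (Set.range f) ≤ 1 / (r : ℝ)) :
    ∃ U : Finset ℕ, ∀ x y, x ∉ U → y ∉ U → 0 < x → 0 < y →
      lev c r y < lev c r x → c x y = red := by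
  classical
  have hcl : ∀ q : ℕ × ℕ, ∃ F : Finset ℕ, q.2 < q.1 → q.1 < r →
      ∀ x y, x ∉ F → y ∉ F → 0 < x → 0 < y → lev c r x = q.1 → lev c r y = q.2 →
        c x y ≠ blue := by
    intro q
    by_cases hq : q.2 < q.1 ∧ q.1 < r
    · obtain ⟨F, hF⟩ := bclass_cover hr h hblue hq.1 hq.2
      exact ⟨F, fun _ _ => hF⟩
    · exact ⟨∅, fun h1 h2 => absurd ⟨h1, h2⟩ hq⟩
  choose Fc hFc using hcl
  refine ⟨(Finset.range r ×ˢ Finset.range r).biUnion Fc, ?_⟩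
  intro x y hx hy hxp hyp hlt
  apply not_blue_eq_red
  intro hblue'
  have hq : (lev c r x, lev c r y) ∈ Finset.range r ×ˢ Finset.range r := by
    rw [Finset.mem_product]
    exact ⟨Finset.mem_range.2 (lev_lt hr), Finset.mem_range.2 (lev_lt hr)⟩
  have hxF : x ∉ Fc (lev c r x, lev c r y) :=
    fun hmem => hx (Finset.mem_biUnion.2 ⟨_, hq, hmem⟩)
  have hyF : y ∉ Fc (lev c r x, lev c r y) :=
    fun hmem => hy (Finset.mem_biUnion.2 ⟨_, hq, hmem⟩)
  exact hFc _ hlt (lev_lt hr) x y hxF hyF hxp hyp rfl rfl hblue'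

lemma desc (hr : 1 ≤ r) (h : NoPathOfLength c red r)
    (hblue : ∀ f : ℕ → ℕ, InfPath c blue f → upDens (Set.range f) ≤ 1 / (r : ℝ))
    (U : Finset ℕ)
    (hU : ∀ x y, x ∉ U → y ∉ U → 0 < x → 0 < y → lev c r y < lev c r x → c x y = red) :
    ∀ k z, z ∉ U → 0 < z → lev c r z = k → ∀ A : Finset ℕ,
      ∃ l : List ℕ, FinPath c red l ∧ l.head? = some z ∧ l.length = k + 1 ∧
        (∀ v ∈ l, v ∉ U) ∧ (∀ v ∈ l.tail, v ∉ A) := by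
  intro k
  induction k with
  | zero =>
    intro z hz hzp _ A
    exact ⟨[z], ⟨by simp, by simpa using hzp, List.isChain_singleton _⟩, by simp, by simp,
      by simpa using hz, by simp⟩
  | succ k ih =>
    intro z hz hzp hzl A
    have hkr : k < r := by
      have := lev_le (c := c) (r := r) (v := z)
      omega
    have hLk := levels_infinite hr h hblue k hkr
    obtain ⟨w, hwL, hwbad⟩ := (hLk.diff ((U.finite_toSet.union A.finite_toSet).union
      (Set.finite_singleton z))).nonempty
    simp only [Set.mem_union, Set.mem_singleton_iff, Finset.mem_coe, not_or] at hwbad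
    obtain ⟨⟨hwU, hwA⟩, hwz⟩ := hwbad
    have hred : c z w = red := hU z w hz hwU hzp (LSet_pos hwL) (by rw [hwL.2, hzl]; omega)
    obtain ⟨l, hl, hlh, hll, hlU, hlA⟩ := ih w hwU (LSet_pos hwL) hwL.2 (insert z A)
    obtain ⟨t, rfl⟩ : ∃ t, l = w :: t := by
      cases l with
      | nil => simp at hlh
      | cons a t =>
        simp only [List.head?_cons, Option.some.injEq] at hlh
        exact ⟨t, by rw [hlh]⟩
    have hzl' : z ∉ w :: t := by
      intro hmem
      rcases List.mem_cons.1 hmem with he | hmem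
      · exact hwz he.symm
      · have := hlA z hmem
        simp at this
    refine ⟨z :: w :: t, ⟨?_, ?_, ?_⟩, by simp, by simpa using hll, ?_, ?_⟩
    · exact List.nodup_cons.2 ⟨hzl', hl.1⟩
    · intro v hv
      rcases List.mem_cons.1 hv with rfl | hv
      · exact hzp
      · exact hl.2.1 v hv
    · rw [List.Chain', List.isChain_cons_cons]
      exact ⟨hred, hl.2.2⟩
    · intro v hv
      rcases List.mem_cons.1 hv with rfl | hv
      · exact hz
      · exact hlU v hv
    · intro v hv
      simp only [List.tail_cons] at hv
      rcases List.mem_cons.1 hv with rfl | hv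
      · exact hwA
      · have := hlA v hv
        simp only [Finset.mem_insert, not_or] at this
        exact this.2

lemma red_iff (hr : 1 ≤ r) (h : NoPathOfLength c red r)
    (hblue : ∀ f : ℕ → ℕ, InfPath c blue f → upDens (Set.range f) ≤ 1 / (r : ℝ)) :
    ∃ U : Finset ℕ, ∀ x y, x ∉ U → y ∉ U → 0 < x → 0 < y → x ≠ y →
      (c x y = red ↔ lev c r y < lev c r x) := by
  obtain ⟨U, hU⟩ := exists_cover hr h hblue
  refine ⟨U, fun x y hx hy hxp hyp hxy => ⟨?_, hU x y hx hy hxp hyp⟩⟩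
  intro hred
  by_contra hle
  push_neg at hle
  obtain ⟨l, hl, hlh, hll, hlU, hlA⟩ := desc hr h hblue U hU (lev c r y) y hy hyp rfl {x}
  obtain ⟨t, rfl⟩ : ∃ t, l = y :: t := by
    cases l with
    | nil => simp at hlh
    | cons a t =>
      simp only [List.head?_cons, Option.some.injEq] at hlh
      exact ⟨t, by rw [hlh]⟩
  have hxl : x ∉ y :: t := by
    intro hmem
    rcases List.mem_cons.1 hmem with he | hmem
    · exact hxy he
    · have := hlA x hmem
      simp at this
  have hpath : PathFrom c red x (lev c r y + 1) := by
    refine ⟨x :: y :: t, ⟨List.nodup_cons.2 ⟨hxl, hl.1⟩, ?_, ?_⟩, by simp,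
      by simpa using hll⟩
    · intro v hv
      rcases List.mem_cons.1 hv with rfl | hv
      · exact hxp
      · exact hl.2.1 v hv
    · rw [List.Chain', List.isChain_cons_cons]
      exact ⟨hred, hl.2.2⟩
  have := le_lev hr h hpath
  omega

end Main

theorem stmt10' (r : ℕ) (hr : 1 ≤ r) (c : ℕ → ℕ → Bool) (h : NoPathOfLength c red r)
    (hblue : ∀ f : ℕ → ℕ, InfPath c blue f → upDens (Set.range f) ≤ 1 / (r : ℝ)) :
    ∃ U : Finset ℕ,
      (∀ v : ℕ, 0 < v → v ∉ U → ∃ i < r, LevelAvoid c U v i) ∧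
      (∀ i j x y : ℕ, x ∉ U → y ∉ U → x ≠ y →
        LevelAvoid c U x i → LevelAvoid c U y j →
        (i < j → c x y = blue ∧ c y x = red) ∧ (i = j → c x y = blue)) := by
  obtain ⟨U, hU⟩ := red_iff hr h hblue
  have hUred : ∀ x y, x ∉ U → y ∉ U → 0 < x → 0 < y → lev c r y < lev c r x →
      c x y = red := fun x y hx hy hxp hyp hlt => by
    have hxy : x ≠ y := by
      intro he
      rw [he] at hlt
      omega
    exact (hU x y hx hy hxp hyp hxy).2 hlt
  -- the avoiding level of every remaining vertex equals its global level
  have hPFA : ∀ v, 0 < v → v ∉ U → PathFromAvoid c U v (lev c r v) := by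
    intro v hv hvU
    obtain ⟨l, h1, h2, h3, h4, h5⟩ := desc hr h hblue U hUred (lev c r v) v hvU hv rfl ∅
    exact ⟨l, h1, h4, h2, h3⟩
  have hnot : ∀ v k, PathFromAvoid c U v k → k ≤ lev c r v := by
    rintro v k ⟨l, h1, h2, h3, h4⟩
    exact le_lev hr h ⟨l, h1, h3, h4⟩
  have hmono : ∀ v k m, m ≤ k → PathFromAvoid c U v k → PathFromAvoid c U v m := by
    rintro v k m hm ⟨l, hfp, hav, hh, hlen⟩
    obtain ⟨t, rfl⟩ : ∃ t, l = v :: t := by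
      cases l with
      | nil => simp at hh
      | cons a t =>
        simp only [List.head?_cons, Option.some.injEq] at hh
        exact ⟨t, by rw [hh]⟩
    refine ⟨(v :: t).take (m+1), finPath_prefix hfp (List.take_prefix _ _),
      fun x hx => hav x ((List.take_prefix _ _).sublist.subset hx), by simp, ?_⟩
    rw [List.length_take]
    simp only [List.length_cons] at hlen
    rw [Nat.min_eq_left (by simp only [List.length_cons]; omega)]
  have hLA : ∀ v, 0 < v → v ∉ U → LevelAvoid c U v (lev c r v) := by
    intro v hv hvU
    refine ⟨hPFA v hv hvU, fun hp => ?_⟩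
    have := hnot _ _ hp
    omega
  have hposof : ∀ v i, LevelAvoid c U v i → 0 < v := by
    rintro v i ⟨⟨l, hfp, hav, hh, hlen⟩, -⟩
    exact hfp.2.1 v (List.mem_of_mem_head? (by rw [hh]; rfl))
  have hUniq : ∀ v i, 0 < v → v ∉ U → LevelAvoid c U v i → i = lev c r v := by
    rintro v i hv hvU ⟨h1, h2⟩
    have hle := hnot v i h1
    rcases Nat.lt_or_ge i (lev c r v) with hlt | hge
    · exact absurd (hmono v (lev c r v) (i+1) (by omega) (hPFA v hv hvU)) h2
    · omega
  refine ⟨U, ?_, ?_⟩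
  · intro v hv hvU
    exact ⟨lev c r v, lev_lt hr, hLA v hv hvU⟩
  · intro i j x y hx hy hxy hLx hLy
    have hxp := hposof x i hLx
    have hyp := hposof y j hLy
    have hi := hUniq x i hxp hx hLx
    have hj := hUniq y j hyp hy hLy
    constructor
    · intro hij
      constructor
      · apply not_red_eq_blue
        intro hred
        have := (hU x y hx hy hxp hyp hxy).1 hred
        omega
      · exact (hU y x hy hx hyp hxp (Ne.symm hxy)).2 (by omega)
    · intro hij
      apply not_red_eq_blue
      intro hred
      have := (hU x y hx hy hxp hyp hxy).1 hred
      omega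

/-- Stability: if there is no red directed path of length `r` and every blue directed
path has upper density at most `1/r`, then after deleting a finite set `U` of
vertices, the level sets `A_0,...,A_{r-1}` (defined in `ℕ⁺ \ U`) partition the
remaining vertices, all edges from `A_i` to `A_j` with `i < j` are blue, all edges
from `A_j` to `A_i` are red, and all edges inside a level are blue. -/
theorem stmt10 (r : ℕ) (hr : 1 ≤ r) (c : ℕ → ℕ → Bool) (h : NoPathOfLength c red r)
    (hblue : ∀ f : ℕ → ℕ, InfPath c blue f → upDens (Set.range f) ≤ 1 / (r : ℝ)) :
    ∃ U : Finset ℕ,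
      (∀ v : ℕ, 0 < v → v ∉ U → ∃ i < r, LevelAvoid c U v i) ∧
      (∀ i j x y : ℕ, x ∉ U → y ∉ U → x ≠ y →
        LevelAvoid c U x i → LevelAvoid c U y j →
        (i < j → c x y = blue ∧ c y x = red) ∧ (i = j → c x y = blue)) := by
  exact stmt10' r hr c h hblue
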